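/- arXiv:1307.5522 — 6 statements merged into one kernel-verified Lean document; each statement's English description precedes it below -/
import Mathlib

section
/- For every positive integer n, the general linear group GL_n(ℂ) is a Jordan group: there exists a positive integer d such that every finite subgroup K of GL_n(ℂ) contains an abelian subgroup that is normal in K and has index at most d in K. -/
/-- A group `G` is *Jordan with constant* `d` if every finite subgroup `K` of `G`
contains an abelian subgroup that is normal in `K` and has index at most `d` in `K`. -/
def IsJordanWith (G : Type*) [Group G] (d : ℕ) : Prop :=
  ∀ K : Subgroup G, Finite K →
    ∃ A : Subgroup K, A.Normal ∧ IsMulCommutative A ∧ A.index ≤ d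

/-- A group `G` is *Jordan* if some positive integer `d` witnesses the Jordan property. -/
def IsJordanGroup (G : Type*) [Group G] : Prop :=
  ∃ d : ℕ, 0 < d ∧ IsJordanWith G d

/-!
`GL n ℂ` is the unit group of the C*-algebra of `n × n` matrices with the operator norm. For a
finite subgroup `K` of the unit group `Aˣ` of a finite-dimensional C*-algebra, averaging
`star g * g` over `K` gives a strictly positive `P`, and conjugating by `√P` moves `K` into the
unitary group; so it suffices to treat finite groups of unitaries. There
`‖⁅u, v⁆ - 1‖ ≤ 2 ‖u - 1‖ ‖v - 1‖`. Let `u, v ∈ K` be within `1/4` of `1`. If they do not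
commute, pick `w ∈ K` closest to `1` among the elements not commuting with `u`. The commutator
`c = ⁅u, w⁆` is closer to `1` than `w`, so commutes with `u`, and then
`u ^ k * w * (u ^ k)⁻¹ = c ^ k * w` keeps every power of `c` within `1/2` of `1`. A finite-order
unitary `c ≠ 1` cannot do that: some power of an eigenvalue has negative real part. Hence the
elements of `K` within `1/4` of `1` generate an abelian subgroup, normal because the distance to `1`
is conjugation invariant; distinct cosets are `1/4` apart, so its index is at most the size of a
`1/8`-net of the unit ball, which is compact in finite dimension.
-/

open scoped commutatorElement

section Jordan

variable {G H : Type*} [Group G] [Group H] {d : ℕ}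

theorem IsJordanWith.pos (h : IsJordanWith G d) : 0 < d := by
  obtain ⟨A, -, -, hA⟩ := h ⊥ inferInstance
  exact (Nat.pos_of_ne_zero A.index_ne_zero_of_finite).trans_le hA

theorem IsJordanWith.isJordanGroup (h : IsJordanWith G d) : IsJordanGroup G :=
  ⟨d, h.pos, h⟩

theorem IsJordanWith.of_forall_injective (hH : IsJordanWith H d)
    (hG : ∀ K : Subgroup G, Finite K → ∃ f : K →* H, Function.Injective f) :
    IsJordanWith G d := by
  intro K hK
  obtain ⟨f, hf⟩ := hG K hK
  let e : K ≃* f.range := MonoidHom.ofInjective hf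
  obtain ⟨A, hAn, hAc, hAi⟩ := hH f.range (Finite.of_equiv K e.toEquiv)
  refine ⟨A.comap e.toMonoidHom, hAn.comap _, A.comap_injective_isMulCommutative e.injective, ?_⟩
  exact (A.index_comap_of_surjective e.surjective).trans_le hAi

end Jordan

theorem Subgroup.index_le_of_inv_mul_mem {G X : Type*} [Group G] [Finite X] (H : Subgroup G)
    (f : G → X) (hf : ∀ g h, f g = f h → g⁻¹ * h ∈ H) : H.index ≤ Nat.card X := by
  rw [Subgroup.index]
  refine Nat.card_le_card_of_injective (fun q => f q.out) fun q r hqr => ?_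
  rw [← q.out_eq', ← r.out_eq']
  exact QuotientGroup.eq.mpr (hf _ _ hqr)

theorem Subgroup.normal_closure_of_conj_mem {G : Type*} [Group G] {s : Set G}
    (hs : ∀ g, ∀ x ∈ s, g * x * g⁻¹ ∈ s) : (closure s).Normal := by
  suffices Group.conjugatesOfSet s = s from this ▸ normalClosure_normal
  refine Set.Subset.antisymm (fun x hx => ?_) Group.subset_conjugatesOfSet
  obtain ⟨y, hy, hyx⟩ := Group.mem_conjugatesOfSet_iff.mp hx
  obtain ⟨g, rfl⟩ := isConj_iff.mp hyx
  exact hs g y hy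

theorem Complex.exists_one_lt_norm_pow_sub_one {μ : ℂ} (hμ : IsOfFinOrder μ) (h1 : μ ≠ 1) :
    ∃ k : ℕ, 1 < ‖μ ^ k - 1‖ := by
  obtain ⟨m, hm, hμm⟩ := isOfFinOrder_iff_pow_eq_one.mp hμ
  have hsum : ∑ k ∈ Finset.range m, (μ ^ k).re = 0 := by
    rw [← Complex.re_sum, geom_sum_eq h1, hμm, sub_self, zero_div, Complex.zero_re]
  obtain ⟨k, -, hk⟩ : ∃ k ∈ Finset.range m, (μ ^ k).re < 0 := by
    by_contra! h
    have := Finset.single_le_sum h (Finset.mem_range.mpr hm)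
    rw [hsum, pow_zero, Complex.one_re] at this
    linarith
  refine ⟨k, lt_of_lt_of_le ?_ (Complex.abs_re_le_norm _)⟩
  rw [Complex.sub_re, Complex.one_re, abs_of_neg (by linarith)]
  linarith

theorem Commute.conj_pow_eq_commutatorElement_pow_mul {G : Type*} [Group G] {u w : G}
    (h : Commute u ⁅u, w⁆) (k : ℕ) : u ^ k * w * (u ^ k)⁻¹ = ⁅u, w⁆ ^ k * w := by
  have hcw : u * w * u⁻¹ = ⁅u, w⁆ * w := by rw [commutatorElement_def, inv_mul_cancel_right]
  induction k with
  | zero => simp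
  | succ k ih =>
    calc u ^ (k + 1) * w * (u ^ (k + 1))⁻¹ = u * (u ^ k * w * (u ^ k)⁻¹) * u⁻¹ := by group
      _ = u * ⁅u, w⁆ ^ k * u⁻¹ * (u * w * u⁻¹) := by
        rw [ih]; simp only [mul_assoc, inv_mul_cancel_left]
      _ = ⁅u, w⁆ ^ (k + 1) * w := by
        rw [(h.pow_right k).eq, mul_inv_cancel_right, hcw, pow_succ, mul_assoc]

namespace Unitary

variable {A : Type*} [CStarAlgebra A]

theorem dist_mul_left (g u v : unitary A) : dist (g * u) (g * v) = dist u v := by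
  simp only [Subtype.dist_eq, dist_eq_norm, Submonoid.coe_mul, ← mul_sub,
    CStarRing.norm_coe_unitary_mul]

theorem dist_mul_right (g u v : unitary A) : dist (u * g) (v * g) = dist u v := by
  simp only [Subtype.dist_eq, dist_eq_norm, Submonoid.coe_mul, ← sub_mul,
    CStarRing.norm_mul_coe_unitary]

theorem dist_conj_one (g u : unitary A) : dist (g * u * g⁻¹) 1 = dist u 1 := by
  calc dist (g * u * g⁻¹) 1 = dist (g * u * g⁻¹) (g * 1 * g⁻¹) := by rw [mul_one, mul_inv_cancel]
    _ = dist u 1 := by rw [dist_mul_right, dist_mul_left]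

theorem dist_commutatorElement_one_le (u v : unitary A) :
    dist ⁅u, v⁆ 1 ≤ 2 * dist u 1 * dist v 1 := by
  have hcomm : ⁅u, v⁆ * (v * u) = u * v := by rw [commutatorElement_def]; group
  rw [← dist_mul_right (v * u), hcomm, one_mul]
  simp only [Subtype.dist_eq, dist_eq_norm, Submonoid.coe_mul, OneMemClass.coe_one]
  rw [show (u * v - v * u : A) = (u - 1) * (v - 1) - (v - 1) * (u - 1) by noncomm_ring]
  calc _ ≤ ‖(u - 1 : A) * (v - 1)‖ + ‖(v - 1 : A) * (u - 1)‖ := norm_sub_le _ _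
    _ ≤ ‖(u - 1 : A)‖ * ‖(v - 1 : A)‖ + ‖(v - 1 : A)‖ * ‖(u - 1 : A)‖ :=
      add_le_add (norm_mul_le _ _) (norm_mul_le _ _)
    _ = _ := by ring

theorem exists_one_lt_dist_pow_one {u : unitary A} (hu : IsOfFinOrder u) (h1 : u ≠ 1) :
    ∃ k : ℕ, 1 < dist (u ^ k) 1 := by
  have : Nontrivial A := nontrivial_of_ne (u : A) 1 fun h => h1 (Subtype.ext h)
  obtain ⟨μ, hμ, hμ1⟩ : ∃ μ ∈ spectrum ℂ (u : A), μ ≠ 1 := by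
    by_contra! h
    exact h1 (Subtype.ext (CFC.eq_one_of_spectrum_subset_one (u : A) h))
  have hμfin : IsOfFinOrder μ := by
    obtain ⟨m, hm, hum⟩ := isOfFinOrder_iff_pow_eq_one.mp hu
    refine isOfFinOrder_iff_pow_eq_one.mpr ⟨m, hm, ?_⟩
    have := spectrum.pow_image_subset (u : A) m ⟨μ, hμ, rfl⟩
    rwa [← SubmonoidClass.coe_pow, hum, OneMemClass.coe_one, spectrum.one_eq,
      Set.mem_singleton_iff] at this
  obtain ⟨k, hk⟩ := Complex.exists_one_lt_norm_pow_sub_one hμfin hμ1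
  have hmem : μ ^ k - 1 ∈ spectrum ℂ ((u : A) ^ k - 1) := by
    simpa using spectrum.subset_polynomial_aeval (u : A) (.X ^ k - 1) ⟨μ, hμ, rfl⟩
  refine ⟨k, hk.trans_le ?_⟩
  rw [Subtype.dist_eq, dist_eq_norm, SubmonoidClass.coe_pow, OneMemClass.coe_one]
  exact spectrum.norm_le_norm_of_mem hmem

theorem dist_pow_commutatorElement_one_le {u w : unitary A} (h : Commute u ⁅u, w⁆) (k : ℕ) :
    dist (⁅u, w⁆ ^ k) 1 ≤ 2 * dist w 1 :=
  calc dist (⁅u, w⁆ ^ k) 1 = dist (u ^ k * w * (u ^ k)⁻¹) w := by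
        rw [h.conj_pow_eq_commutatorElement_pow_mul, ← dist_mul_right w, one_mul]
    _ ≤ dist (u ^ k * w * (u ^ k)⁻¹) 1 + dist 1 w := dist_triangle _ _ _
    _ = 2 * dist w 1 := by rw [dist_conj_one, dist_comm 1]; ring

theorem commute_of_dist_one_le {K : Subgroup (unitary A)} [Finite K] {u v : unitary A}
    (hu : u ∈ K) (hv : v ∈ K) (hu1 : dist u 1 ≤ 1 / 4) (hv1 : dist v 1 ≤ 1 / 4) :
    Commute u v := by
  by_contra huv
  obtain ⟨w, ⟨hwK, huw⟩, hwmin⟩ := Set.exists_min_image {w | w ∈ K ∧ ¬Commute u w} (dist · 1)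
    ((Set.toFinite (K : Set (unitary A))).subset fun _ hw => hw.1) ⟨v, hv, huv⟩
  have hw1 : dist w 1 ≤ 1 / 4 := (hwmin v ⟨hv, huv⟩).trans hv1
  have hw0 : 0 < dist w 1 := dist_pos.mpr fun h => huw (h ▸ Commute.one_right u)
  have hc : dist ⁅u, w⁆ 1 < dist w 1 := by
    nlinarith [dist_commutatorElement_one_le u w, dist_nonneg (x := u) (y := 1)]
  have hcK : ⁅u, w⁆ ∈ K := by
    rw [commutatorElement_def]
    exact K.mul_mem (K.mul_mem (K.mul_mem hu hwK) (K.inv_mem hu)) (K.inv_mem hwK)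
  have hcu : Commute u ⁅u, w⁆ := by
    by_contra h
    exact (hwmin _ ⟨hcK, h⟩).not_gt hc
  have hc1 : ⁅u, w⁆ ≠ 1 := fun h => huw (commutatorElement_eq_one_iff_mul_comm.mp h)
  obtain ⟨k, hk⟩ := exists_one_lt_dist_pow_one
    (Submonoid.isOfFinOrder_coe.mpr (isOfFinOrder_of_finite (⟨_, hcK⟩ : K))) hc1
  linarith [dist_pow_commutatorElement_one_le hcu k]

def closeToOne (K : Subgroup (unitary A)) : Subgroup K :=
  Subgroup.closure {g | dist (g : unitary A) 1 ≤ 1 / 4}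

variable (K : Subgroup (unitary A))

instance [Finite K] : IsMulCommutative (closeToOne K) :=
  Subgroup.isMulCommutative_closure fun x hx y hy =>
    Subtype.ext (commute_of_dist_one_le x.2 y.2 hx hy)

instance : (closeToOne K).Normal :=
  Subgroup.normal_closure_of_conj_mem fun g x hx => by
    simpa only [Set.mem_ofPred_eq, Subgroup.coe_mul, Subgroup.coe_inv, dist_conj_one] using hx

theorem index_closeToOne_le {t : Set A} [Finite t]
    (ht : ∀ u : unitary A, ∃ y ∈ t, dist (u : A) y < 1 / 8) :
    (closeToOne K).index ≤ Nat.card t := by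
  choose y hyt hy using fun g : K => ht g
  refine Subgroup.index_le_of_inv_mul_mem _ (fun g => (⟨y g, hyt g⟩ : t)) fun g h hgh => ?_
  apply Subgroup.subset_closure
  have hgh : y g = y h := congrArg Subtype.val hgh
  calc dist ((g⁻¹ * h : K) : unitary A) 1 = dist (h : unitary A) g := by
        rw [← dist_mul_left (g : unitary A)]
        simp
    _ ≤ dist (h : A) (y h) + dist (y g) (g : A) := by
        rw [Subtype.dist_eq, hgh]; exact dist_triangle _ _ _
    _ ≤ 1 / 4 := by linarith [hy g, hy h, dist_comm (y g) (g : A)]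

theorem exists_isJordanWith [FiniteDimensional ℂ A] : ∃ d, IsJordanWith (unitary A) d := by
  have : ProperSpace A := FiniteDimensional.proper ℂ A
  obtain ⟨t, ht, hcover⟩ := Metric.totallyBounded_iff.mp
    (isCompact_closedBall (0 : A) 1).totallyBounded (1 / 8) (by norm_num)
  have : Finite t := ht
  refine ⟨Nat.card t, fun K _ => ⟨closeToOne K, inferInstance, inferInstance,
    index_closeToOne_le K fun u => ?_⟩⟩
  have hu : (u : A) ∈ Metric.closedBall 0 1 := by
    nontriviality A
    simp
  simpa using hcover hu

end Unitary

namespace CStarAlgebra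

variable {A : Type*} [CStarAlgebra A] [PartialOrder A] [StarOrderedRing A]

theorem exists_conj_mem_unitary (K : Subgroup Aˣ) [Finite K] :
    ∃ Q : Aˣ, ∀ g ∈ K, ((Q * g * Q⁻¹ : Aˣ) : A) ∈ unitary A := by
  classical
  have := Fintype.ofFinite K
  set P : A := ∑ g : K, star ((g : Aˣ) : A) * (g : Aˣ) with hP
  have hPpos : IsStrictlyPositive P := by
    rw [hP, ← Finset.add_sum_erase _ _ (Finset.mem_univ 1)]
    simp only [OneMemClass.coe_one, Units.val_one, star_one, mul_one]
    exact isStrictlyPositive_one.add_nonneg (Finset.sum_nonneg fun g _ => star_mul_self_nonneg _)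
  have hPinv : ∀ h ∈ K, star (h : A) * P * h = P := fun h hh => by
    rw [hP, Finset.mul_sum, Finset.sum_mul]
    refine Fintype.sum_equiv (Equiv.mulRight ⟨h, hh⟩) _ _ fun g => ?_
    simp [mul_assoc]
  obtain ⟨Q, hQ⟩ : IsUnit (CFC.sqrt P) := hPpos.isUnit_cfcSqrt
  have hQQ : (Q : A) * Q = P := hQ ▸ CFC.sqrt_mul_sqrt_self P hPpos.nonneg
  have hQs : star (Q : A) = Q := hQ ▸ (CFC.sqrt_nonneg P).isSelfAdjoint.star_eq
  have hQinv : star (↑Q⁻¹ : A) * Q = 1 := by rw [← hQs, ← star_mul, Units.mul_inv, star_one]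
  refine ⟨Q, fun g hg => (Units.isUnit _).mem_unitary_iff_star_mul_self.mpr ?_⟩
  calc star ((Q * g * Q⁻¹ : Aˣ) : A) * ((Q * g * Q⁻¹ : Aˣ) : A)
      = star (↑Q⁻¹ : A) * (star (g : A) * (Q * Q) * g) * ↑Q⁻¹ := by
        simp only [Units.val_mul, star_mul, hQs, mul_assoc]
    _ = star (↑Q⁻¹ : A) * Q * (Q * ↑Q⁻¹) := by
        rw [hQQ, hPinv g hg, ← hQQ]; simp only [mul_assoc]
    _ = 1 := by rw [hQinv, Units.mul_inv, one_mul]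

theorem isJordanGroup_units [FiniteDimensional ℂ A] : IsJordanGroup Aˣ := by
  obtain ⟨d, hd⟩ := Unitary.exists_isJordanWith (A := A)
  refine (hd.of_forall_injective fun K _ => ?_).isJordanGroup
  obtain ⟨Q, hQ⟩ := exists_conj_mem_unitary K
  let conj : K →* A := (Units.coeHom A).comp ((MulAut.conj Q).toMonoidHom.comp K.subtype)
  refine ⟨conj.codRestrict (unitary A) fun g => hQ g g.2, fun g h hgh => ?_⟩
  exact Subtype.ext <| (MulAut.conj Q).injective <| Units.ext <| congrArg Subtype.val hgh

end CStarAlgebra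

open scoped Matrix.Norms.L2Operator MatrixOrder

open Matrix in
theorem GL_isJordan_general (n : ℕ) : IsJordanGroup (GL (Fin n) ℂ) :=
  CStarAlgebra.isJordanGroup_units

open Matrix in
/-- Jordan's theorem: for every positive integer `n`, the group `GL n ℂ` is Jordan. -/
theorem GL_isJordan (n : ℕ) (hn : 0 < n) : IsJordanGroup (GL (Fin n) ℂ) :=
  GL_isJordan_general n
end

section
/- Let H be a finite normal subgroup of a group G. If G is Jordan with a witness constant d (every finite subgroup K of G contains an abelian normal subgroup of K of index at most d), then the quotient group G/H is Jordan with the same witness constant d; in particular J_{G/H} ≤ J_G. -/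
namespace Subgroup

variable {G G' : Type*} [Group G] [Group G']

theorem finite_comap_of_finite_ker (f : G →* G') (K : Subgroup G') [Finite f.ker] [Finite K] :
    Finite (K.comap f) := by
  let ι : (f.subgroupComap K).ker → f.ker := fun x ↦ ⟨x.1.1, congr_arg Subtype.val x.2⟩
  have hι : Function.Injective ι := by
    rintro ⟨⟨x, _⟩, _⟩ ⟨⟨y, _⟩, _⟩ h
    cases Subtype.mk.inj h
    rfl
  have : Finite (f.subgroupComap K).ker := Finite.of_injective ι hι
  exact (f.subgroupComap K).finite_iff_finite_ker_range.2 ⟨this, inferInstance⟩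

theorem index_map_le_of_surjective {f : G →* G'} (hf : Function.Surjective f) (A : Subgroup G)
    [A.FiniteIndex] : (A.map f).index ≤ A.index :=
  Nat.le_of_dvd (Nat.pos_of_ne_zero FiniteIndex.index_ne_zero) (A.index_map_dvd hf)

end Subgroup

theorem exists_normal_isMulCommutative_index_le_of_surjective {K L : Type*} [Group K] [Group L]
    [Finite K] {f : K →* L} (hf : Function.Surjective f) {d : ℕ}
    (hK : ∃ A : Subgroup K, A.Normal ∧ IsMulCommutative A ∧ A.index ≤ d) :
    ∃ B : Subgroup L, B.Normal ∧ IsMulCommutative B ∧ B.index ≤ d := by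
  obtain ⟨A, hA, _, hAd⟩ := hK
  exact ⟨A.map f, hA.map f hf, inferInstance, (A.index_map_le_of_surjective hf).trans hAd⟩

/-- If `H` is a finite normal subgroup of `G` and `G` is Jordan with witness `d`,
then `G ⧸ H` is Jordan with the same witness `d`. -/
theorem quotient_isJordanWith_of_finite_normal {G : Type*} [Group G] (H : Subgroup G)
    [H.Normal] [Finite H] (d : ℕ) (hG : IsJordanWith G d) : IsJordanWith (G ⧸ H) d := by
  intro K _
  set π := QuotientGroup.mk' H
  have : Finite π.ker := by rwa [QuotientGroup.ker_mk']
  have hK' : Finite (K.comap π) := Subgroup.finite_comap_of_finite_ker π K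
  exact exists_normal_isMulCommutative_index_le_of_surjective
    (π.subgroupComap_surjective_of_surjective K (QuotientGroup.mk'_surjective H)) (hG _ hK')
end

section
/- Let G₁ and G₂ be groups. The direct product G₁ × G₂ is Jordan if and only if both G₁ and G₂ are Jordan. Moreover, in this case J_{G₁} ≤ J_{G₁ × G₂}, J_{G₂} ≤ J_{G₁ × G₂}, and J_{G₁ × G₂} ≤ J_{G₁} · J_{G₂}; concretely, if d₁ witnesses the Jordan property for G₁ and d₂ witnesses it for G₂, then d₁·d₂ witnesses it for G₁ × G₂. -/
/-!
A finite subgroup of `G₁` is a finite subgroup of `G₁ × G₂`, so a Jordan constant of the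
product works for each factor. Conversely, a finite `K ≤ G₁ × G₂` embeds into `K₁ × K₂`,
where `Kᵢ` is its projection to `Gᵢ`; if `Aᵢ ⊴ Kᵢ` are abelian of index at most `dᵢ`, then
`A₁ × A₂` is abelian and normal of index at most `d₁ d₂` in `K₁ × K₂`, and its preimage in `K`
is still abelian and normal, of no larger index.
-/

open Function

def HasAbelianNormalSubgroupOfIndexLE (K : Type*) [Group K] (d : ℕ) : Prop :=
  ∃ A : Subgroup K, A.Normal ∧ IsMulCommutative A ∧ A.index ≤ d

namespace HasAbelianNormalSubgroupOfIndexLE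

variable {K L : Type*} [Group K] [Group L]

theorem of_injective [Finite L] {d : ℕ} {f : K →* L} (hf : Injective f)
    (h : HasAbelianNormalSubgroupOfIndexLE L d) : HasAbelianNormalSubgroupOfIndexLE K d := by
  obtain ⟨A, hA, hcomm, hle⟩ := h
  refine ⟨A.comap f, hA.comap f, A.comap_injective_isMulCommutative hf, ?_⟩
  calc (A.comap f).index = A.relIndex f.range := A.index_comap f
    _ ≤ A.relIndex ⊤ :=
      A.relIndex_le_of_le_right le_top (A.relIndex_top_right ▸ A.index_ne_zero_of_finite)
    _ = A.index := A.relIndex_top_right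
    _ ≤ d := hle

theorem prod {d₁ d₂ : ℕ} (h₁ : HasAbelianNormalSubgroupOfIndexLE K d₁)
    (h₂ : HasAbelianNormalSubgroupOfIndexLE L d₂) :
    HasAbelianNormalSubgroupOfIndexLE (K × L) (d₁ * d₂) := by
  obtain ⟨A₁, hA₁, hcomm₁, hle₁⟩ := h₁
  obtain ⟨A₂, hA₂, hcomm₂, hle₂⟩ := h₂
  refine ⟨A₁.prod A₂, inferInstance, ⟨⟨fun x y => ?_⟩⟩, ?_⟩
  · exact (A₁.prodEquiv A₂).injective <| by
      rw [map_mul, map_mul]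
      exact Std.Commutative.comm (op := (· * ·)) _ _
  · rw [Subgroup.index_prod]
    exact Nat.mul_le_mul hle₁ hle₂

end HasAbelianNormalSubgroupOfIndexLE

section IsJordanWith

variable {G H : Type*} [Group G] [Group H]

theorem Subgroup.finite_map (f : G →* H) (K : Subgroup G) [Finite K] : Finite (K.map f) :=
  Finite.of_surjective _ (f.subgroupMap_surjective K)

theorem IsJordanWith.of_injective {d : ℕ} {f : G →* H} (hf : Injective f)
    (h : IsJordanWith H d) : IsJordanWith G d := fun K _ =>
  have := K.finite_map f
  HasAbelianNormalSubgroupOfIndexLE.of_injective (f := (K.equivMapOfInjective f hf).toMonoidHom)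
    (K.equivMapOfInjective f hf).injective (h (K.map f) this)

theorem IsJordanWith.prod {d₁ d₂ : ℕ} (h₁ : IsJordanWith G d₁) (h₂ : IsJordanWith H d₂) :
    IsJordanWith (G × H) (d₁ * d₂) := fun K _ => by
  have := K.finite_map (MonoidHom.fst G H)
  have := K.finite_map (MonoidHom.snd G H)
  let π : K →* K.map (MonoidHom.fst G H) × K.map (MonoidHom.snd G H) :=
    ((MonoidHom.fst G H).subgroupMap K).prod ((MonoidHom.snd G H).subgroupMap K)
  have hπ : Injective π := fun x y hxy =>
    Subtype.ext (Prod.ext (congrArg (·.1.1) hxy) (congrArg (·.2.1) hxy))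
  exact HasAbelianNormalSubgroupOfIndexLE.prod (h₁ _ inferInstance) (h₂ _ inferInstance) |>.of_injective hπ

end IsJordanWith

/-- A product of two groups is Jordan iff both factors are; a witness for the product
witnesses each factor, and the product of witnesses witnesses the product. -/
theorem prod_isJordan_iff {G₁ G₂ : Type*} [Group G₁] [Group G₂] :
    (IsJordanGroup (G₁ × G₂) ↔ IsJordanGroup G₁ ∧ IsJordanGroup G₂) ∧
    (∀ d : ℕ, IsJordanWith (G₁ × G₂) d → IsJordanWith G₁ d ∧ IsJordanWith G₂ d) ∧
    (∀ d₁ d₂ : ℕ, IsJordanWith G₁ d₁ → IsJordanWith G₂ d₂ →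
      IsJordanWith (G₁ × G₂) (d₁ * d₂)) := by
  have factors (d : ℕ) (h : IsJordanWith (G₁ × G₂) d) :
      IsJordanWith G₁ d ∧ IsJordanWith G₂ d :=
    ⟨h.of_injective (f := MonoidHom.inl G₁ G₂) fun _ _ hab => congrArg Prod.fst hab,
      h.of_injective (f := MonoidHom.inr G₁ G₂) fun _ _ hab => congrArg Prod.snd hab⟩
  refine ⟨⟨fun ⟨d, hd, h⟩ => ⟨⟨d, hd, (factors d h).1⟩, ⟨d, hd, (factors d h).2⟩⟩, ?_⟩,
    factors, fun _ _ h₁ h₂ => h₁.prod h₂⟩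
  rintro ⟨⟨d₁, hd₁, h₁⟩, ⟨d₂, hd₂, h₂⟩⟩
  exact ⟨d₁ * d₂, Nat.mul_pos hd₁ hd₂, h₁.prod h₂⟩
end

section
/- Let H be a normal subgroup of a group G. If both H and the quotient G/H are Jordan groups, then any collection of pairwise nonisomorphic finite simple nonabelian subgroups of G is finite; equivalently, there are only finitely many isomorphism classes of finite simple nonabelian subgroups of G. -/
open Equiv

theorem exists_injective_monoidHom_perm_fin {K : Type*} [Group K] [Finite K] {N : ℕ}
    (hN : Nat.card K ≤ N) : ∃ φ : K →* Perm (Fin N), Function.Injective φ := by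
  let ι : K ↪ Fin N := (Finite.equivFin K).toEmbedding.trans (Fin.castLEEmb hN)
  exact ⟨(Perm.viaEmbeddingHom ι).comp (MulAction.toPermHom K K),
    (Perm.viaEmbeddingHom_injective ι).comp MulAction.toPerm_injective⟩

theorem Finite.of_pairwise_not_mulEquiv {ι : Type*} (K : ι → Type*) [∀ i, Group (K i)]
    [∀ i, Finite (K i)] {N : ℕ} (hcard : ∀ i, Nat.card (K i) ≤ N)
    (hpair : Pairwise fun i j => ¬ Nonempty (K i ≃* K j)) : Finite ι := by
  choose φ hφ using fun i => exists_injective_monoidHom_perm_fin (hcard i)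
  refine Finite.of_injective (fun i => (φ i).range) fun i j hij => ?_
  by_contra hne
  exact hpair hne ⟨(MonoidHom.ofInjective (hφ i)).trans
    ((MulEquiv.subgroupCongr hij).trans (MonoidHom.ofInjective (hφ j)).symm)⟩

section Jordan

variable {G : Type*} [Group G] {K : Type*} [Group K] [Finite K] [IsSimpleGroup K]

theorem IsJordanWith.card_le_of_injective {d : ℕ} (hG : IsJordanWith G d)
    (hK : ¬ ∀ a b : K, a * b = b * a) {f : K →* G} (hf : Function.Injective f) :
    Nat.card K ≤ d := by
  let e : K ≃* f.range := MonoidHom.ofInjective hf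
  have : Finite f.range := Finite.of_surjective e e.surjective
  obtain ⟨A, hA_normal, hA_comm, hA_index⟩ := hG f.range this
  have hB_normal : (A.comap e.toMonoidHom).Normal := hA_normal.comap _
  rcases IsSimpleGroup.eq_bot_or_eq_top_of_normal _ hB_normal with hB | hB
  · calc Nat.card K = (A.comap e.toMonoidHom).index := by rw [hB, Subgroup.index_bot]
      _ = A.index := Subgroup.index_comap_of_surjective _ e.surjective
      _ ≤ d := hA_index
  · have hmem : ∀ a : K, e a ∈ A := fun a => by
      simpa using (Subgroup.eq_top_iff' _).mp hB a
    refine absurd (fun a b => e.injective ?_) hK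
    rw [map_mul, map_mul]
    exact setLike_mul_comm (hmem a) (hmem b)

theorem IsJordanWith.card_le_max_of_injective {H : Subgroup G} [H.Normal] {d₁ d₂ : ℕ}
    (hH : IsJordanWith H d₁) (hQ : IsJordanWith (G ⧸ H) d₂)
    (hK : ¬ ∀ a b : K, a * b = b * a) {f : K →* G} (hf : Function.Injective f) :
    Nat.card K ≤ max d₁ d₂ := by
  let π : K →* G ⧸ H := (QuotientGroup.mk' H).comp f
  rcases IsSimpleGroup.eq_bot_or_eq_top_of_normal _ π.normal_ker with hker | hker
  · exact (hQ.card_le_of_injective hK (π.ker_eq_bot_iff.mp hker)).trans (le_max_right _ _)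
  · have hmem : ∀ a : K, f a ∈ H := fun a => by
      simpa [π] using (Subgroup.eq_top_iff' _).mp hker a
    have hinj : Function.Injective (f.codRestrict H hmem) := fun a b hab =>
      hf (congrArg Subtype.val hab)
    exact (hH.card_le_of_injective hK hinj).trans (le_max_left _ _)

end Jordan

/-- If `H` is normal in `G` and both `H` and `G ⧸ H` are Jordan, then any collection of
pairwise nonisomorphic finite simple nonabelian subgroups of `G` is finite. -/
theorem finite_simple_nonabelian_classes {G : Type*} [Group G] (H : Subgroup G) [H.Normal]
    (hH : IsJordanGroup H) (hQ : IsJordanGroup (G ⧸ H))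
    (𝒮 : Set (Subgroup G))
    (hS : ∀ S ∈ 𝒮, Finite S ∧ IsSimpleGroup S ∧ ¬ ∀ a b : S, a * b = b * a)
    (hpair : 𝒮.Pairwise fun S T => ¬ Nonempty (S ≃* T)) :
    𝒮.Finite := by
  obtain ⟨d₁, -, hJ₁⟩ := hH
  obtain ⟨d₂, -, hJ₂⟩ := hQ
  have hfin : ∀ S : 𝒮, Finite (S : Subgroup G) := fun S => (hS S S.2).1
  rw [← Set.finite_coe_iff]
  refine Finite.of_pairwise_not_mulEquiv (fun S : 𝒮 => (S : Subgroup G)) (N := max d₁ d₂)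
    (fun S => ?_) hpair.subtype
  obtain ⟨-, hsimple, hnonab⟩ := hS S S.2
  exact hJ₁.card_le_max_of_injective hJ₂ hnonab (S : Subgroup G).subtype_injective
end

section
/- Let H be a normal subgroup of a group G such that the quotient G/H is bounded, with b a positive integer bounding the orders of all finite subgroups of G/H. Then G is Jordan if and only if H is Jordan; moreover, if every finite subgroup of H contains an abelian normal subgroup of index at most j, then every finite subgroup F of G contains an abelian subgroup normal in F of index at most b · j^b. In particular J_G ≤ b_{G/H} · (J_H)^{b_{G/H}}. -/
/-!
Let `F` be a finite subgroup of `G`. Then `N = F ⊓ H` is normal in `F`, of index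
`|F / N| = |FH / H| ≤ b`, and `N` embeds in `H`, so it has an abelian normal subgroup `A` of
index at most `j`. Since `N` normalizes `A`, the conjugate `g A g⁻¹` depends only on the coset
`gN`, so the normal core of `A` in `F` is the intersection of at most `b` conjugates of `A`, each of
index at most `j` in `N`. It is an abelian normal subgroup of `F` of index at most `b * j ^ b`.
-/

open Pointwise

namespace Subgroup

variable {G : Type*} [Group G]

theorem relIndex_normalCore_le_pow {A N : Subgroup G} [N.Normal] [N.FiniteIndex]
    (hN : N ≤ normalizer A) : A.normalCore.relIndex N ≤ A.relIndex N ^ N.index := by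
  have := Fintype.ofFinite (G ⧸ N)
  let conj : G ⧸ N → Subgroup G := fun q ↦ ConjAct.toConjAct q.out • A
  have hcore : A.normalCore = ⨅ q, conj q := by
    rw [normalCore_eq_iInf_conjAct]
    refine le_antisymm (le_iInf fun q ↦ iInf_le _ _) (le_iInf fun g ↦ ?_)
    obtain ⟨n, hn⟩ := QuotientGroup.mk_out_eq_mul N (ConjAct.ofConjAct g)
    calc ⨅ q, conj q ≤ conj (ConjAct.ofConjAct g : G) := iInf_le _ _
      _ = g • A := by
        simp [conj, hn, mul_smul, conjAct_pointwise_smul_eq_self (hN n.2)]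
  have hconj (q : G ⧸ N) : (conj q).relIndex N = A.relIndex N := by
    conv_lhs => rw [← ‹N.Normal›.conjAct (ConjAct.toConjAct q.out)]
    exact relIndex_pointwise_smul _ _ _
  calc A.normalCore.relIndex N = (⨅ q, conj q).relIndex N := by rw [hcore]
    _ ≤ ∏ q, (conj q).relIndex N := relIndex_iInf_le conj
    _ = A.relIndex N ^ N.index := by
      simp [hconj, index_eq_card, Nat.card_eq_fintype_card]

theorem index_normalCore_le {A N : Subgroup G} [N.Normal] [N.FiniteIndex] (hAN : A ≤ N)
    (hN : N ≤ normalizer A) : A.normalCore.index ≤ N.index * A.relIndex N ^ N.index := by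
  rw [← relIndex_mul_index (A.normalCore_le.trans hAN), mul_comm]
  exact Nat.mul_le_mul_left _ (relIndex_normalCore_le_pow hN)

theorem exists_normal_isMulCommutative_index_le (N : Subgroup G) [N.Normal] [N.FiniteIndex]
    (A : Subgroup N) [A.Normal] [IsMulCommutative A] :
    ∃ B : Subgroup G, B.Normal ∧ IsMulCommutative B ∧ B.index ≤ N.index * A.index ^ N.index := by
  have hAN : A.map N.subtype ≤ N := map_subtype_le A
  have hN : N ≤ normalizer (A.map N.subtype) := by
    simpa [normalizer_eq_top, ← MonoidHom.range_eq_map] using le_normalizer_map (H := A) N.subtype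
  have hrel : (A.map N.subtype).relIndex N = A.index := by
    rw [relIndex, subgroupOf, comap_map_eq_self_of_injective N.subtype_injective]
  refine ⟨(A.map N.subtype).normalCore, inferInstance, ?_, ?_⟩
  · exact .of_setLike_mul_comm fun a ha b hb ↦
      setLike_mul_comm (normalCore_le _ ha) (normalCore_le _ hb)
  · simpa [hrel] using index_normalCore_le hAN hN

end Subgroup

namespace IsJordanWith

variable {G G' : Type*} [Group G] [Group G'] {d : ℕ}

theorem of_injective_s12 (h : IsJordanWith G' d) (f : G →* G') (hf : Function.Injective f) :
    IsJordanWith G d := by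
  intro K hK
  let e := K.equivMapOfInjective f hf
  obtain ⟨A, hAn, hAc, hAd⟩ := h (K.map f) (Finite.of_equiv _ e.toEquiv)
  refine ⟨A.comap e.toMonoidHom, hAn.comap _, A.comap_injective_isMulCommutative e.injective, ?_⟩
  rwa [Subgroup.index_comap_of_surjective _ e.surjective]

theorem exists_of_finite [Finite G] (h : IsJordanWith G d) :
    ∃ A : Subgroup G, A.Normal ∧ IsMulCommutative A ∧ A.index ≤ d := by
  obtain ⟨A, hAn, hAc, hAd⟩ := h ⊤ inferInstance
  let e : G ≃* (⊤ : Subgroup G) := Subgroup.topEquiv.symm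
  refine ⟨A.comap e.toMonoidHom, hAn.comap _, A.comap_injective_isMulCommutative e.injective, ?_⟩
  rwa [Subgroup.index_comap_of_surjective _ e.surjective]

theorem of_relIndex_le {H : Subgroup G} [H.Normal] {b j : ℕ} (hH : IsJordanWith H j) (hj : 0 < j)
    (hb : ∀ F : Subgroup G, Finite F → H.relIndex F ≤ b) : IsJordanWith G (b * j ^ b) := by
  intro F hF
  let N := H.subgroupOf F
  have hN : IsJordanWith N j :=
    hH.of_injective_s12 ((F.subtype.comp N.subtype).codRestrict H fun x ↦ x.2)
      ((MonoidHom.injective_codRestrict _ _ _).2 (F.subtype_injective.comp N.subtype_injective))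
  obtain ⟨A, hAn, hAc, hAj⟩ := hN.exists_of_finite
  obtain ⟨B, hBn, hBc, hB⟩ := N.exists_normal_isMulCommutative_index_le A
  refine ⟨B, hBn, hBc, hB.trans ?_⟩
  have hNb : N.index ≤ b := hb F hF
  calc N.index * A.index ^ N.index ≤ b * j ^ N.index := by gcongr
    _ ≤ b * j ^ b := by gcongr

end IsJordanWith

/-- If `H` is normal in `G` and `G ⧸ H` is bounded (all finite subgroups of order at most `b`),
then `G` is Jordan iff `H` is, and a witness `j` for `H` yields the witness `b * j ^ b`
for `G`. -/
theorem isJordanGroup_iff_of_bounded_quotient {G : Type*} [Group G] (H : Subgroup G) [H.Normal]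
    (b : ℕ) (hb : 0 < b) (hbound : ∀ K : Subgroup (G ⧸ H), Finite K → Nat.card K ≤ b) :
    (IsJordanGroup G ↔ IsJordanGroup H) ∧
    (∀ j : ℕ, 0 < j → IsJordanWith H j → IsJordanWith G (b * j ^ b)) := by
  have key (j : ℕ) (hj : 0 < j) (hH : IsJordanWith H j) : IsJordanWith G (b * j ^ b) :=
    hH.of_relIndex_le hj fun F hF ↦ by
      rw [← QuotientGroup.ker_mk' H, Subgroup.relIndex_ker]
      exact hbound _ (Finite.Set.finite_image (F : Set G) _)
  refine ⟨⟨fun ⟨d, hd, hG⟩ ↦ ⟨d, hd, hG.of_injective_s12 H.subtype H.subtype_injective⟩,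
    fun ⟨j, hj, hH⟩ ↦ ⟨b * j ^ b, by positivity, key j hj hH⟩⟩, key⟩
end

section
/- Let k be a field of characteristic zero, let R be a commutative Noetherian local k-algebra with maximal ideal m such that the composition k → R → R/m is an isomorphism (so R has residue field k), and let G be a finite group of k-algebra automorphisms of R. Then the induced linear action of G on the k-vector space m/m² is faithful: if g ∈ G induces the identity map on m/m², then g is the identity automorphism of R. -/
/-! Let `D = g - 1`. If `D` maps `m` into `m ^ (d + 2)`, the twisted Leibniz rule
`D (a * b) = D a * g b + a * D b` shows that `D` raises the `m`-adic order of every element of `m`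
by `d + 1`, so `gᵗ x ≡ x + t • D x` modulo `m ^ (d + 3)`. For `t = |G|` the left side is `x`, and
`|G|` is a unit because `char k = 0`; hence `D x ∈ m ^ (d + 3)`. By induction and Krull's
intersection theorem `D` vanishes on `m`, and since `R = k + m`, `g = 1`. -/

open IsLocalRing

namespace Ideal

variable {R : Type*} [CommRing R] {I : Ideal R} {σ : R →+* R} {d : ℕ}

theorem le_comap_of_forall_sub_mem_pow (h : ∀ x ∈ I, σ x - x ∈ I ^ (d + 1)) :
    I ≤ I.comap σ := fun x hx ↦ by
  simpa using I.add_mem hx (pow_le_self d.succ_ne_zero (h x hx))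

theorem sub_mem_pow_add_of_forall_sub_mem_pow (h : ∀ x ∈ I, σ x - x ∈ I ^ (d + 1)) :
    ∀ (j : ℕ), ∀ x ∈ I ^ (j + 1), σ x - x ∈ I ^ (j + d + 1) := by
  intro j
  induction j with
  | zero => simpa using h
  | succ j ih =>
    intro x hx
    rw [pow_succ] at hx
    refine Submodule.mul_induction_on hx (fun a ha b hb ↦ ?_) (fun y z hy hz ↦ ?_)
    · have hσb : σ b ∈ I := le_comap_of_forall_sub_mem_pow h hb
      rw [show σ (a * b) - a * b = (σ a - a) * σ b + a * (σ b - b) by rw [map_mul]; ring]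
      refine add_mem ?_ ?_
      · simpa [pow_succ, add_right_comm] using mul_mem_mul (ih a ha) hσb
      · simpa [← pow_add, add_assoc, add_left_comm, add_comm] using mul_mem_mul ha (h b hb)
    · simpa [add_sub_add_comm] using add_mem hy hz

theorem iterate_sub_sub_nsmul_mem_pow (h : ∀ x ∈ I, σ x - x ∈ I ^ (d + 2)) {x : R}
    (hx : x ∈ I) (t : ℕ) : σ^[t] x - x - t • (σ x - x) ∈ I ^ (d + 3) := by
  induction t with
  | zero => simp
  | succ t ih =>
    have hσ : I ^ (d + 3) ≤ (I ^ (d + 3)).comap σ :=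
      (pow_right_mono (le_comap_of_forall_sub_mem_pow h) _).trans (le_comap_pow σ _)
    have hD : σ (σ x - x) - (σ x - x) ∈ I ^ (d + 3) :=
      pow_le_pow_right (by omega)
        (sub_mem_pow_add_of_forall_sub_mem_pow h (d + 1) _ (h x hx))
    have hstep : σ^[t + 1] x - x - (t + 1) • (σ x - x) =
        σ (σ^[t] x - x - t • (σ x - x)) + t • (σ (σ x - x) - (σ x - x)) := by
      simp only [Function.iterate_succ_apply', map_sub, map_nsmul]
      module
    rw [hstep]
    exact add_mem (hσ ih) (nsmul_mem hD t)

theorem forall_sub_mem_pow_succ_of_iterate_eq_id {n : ℕ} (hn : IsUnit (n : R)) (hσn : σ^[n] = id)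
    (h : ∀ x ∈ I, σ x - x ∈ I ^ (d + 2)) : ∀ x ∈ I, σ x - x ∈ I ^ (d + 3) := by
  intro x hx
  have := iterate_sub_sub_nsmul_mem_pow h hx n
  rw [hσn, id, sub_self, zero_sub, neg_mem_iff, nsmul_eq_mul] at this
  exact (Submodule.smul_mem_iff_of_isUnit _ hn).1 this

theorem eq_of_forall_sub_mem_pow_two_of_iterate_eq_id [IsHausdorff I R] {n : ℕ}
    (hn : IsUnit (n : R)) (hσn : σ^[n] = id) (h : ∀ x ∈ I, σ x - x ∈ I ^ 2) :
    ∀ x ∈ I, σ x = x := by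
  have hpow : ∀ d, ∀ x ∈ I, σ x - x ∈ I ^ (d + 2) := fun d ↦ by
    induction d with
    | zero => exact h
    | succ d ih => exact forall_sub_mem_pow_succ_of_iterate_eq_id hn hσn ih
  intro x hx
  refine (IsHausdorff.eq_iff_smodEq (I := I)).2 fun i ↦ ?_
  rw [SModEq.sub_mem, smul_eq_mul, mul_top]
  exact pow_le_pow_right (by omega) (hpow i x hx)

end Ideal

theorem IsLocalRing.algHom_eq_id_of_forall_mem_maximalIdeal {k R : Type*} [CommRing k]
    [CommRing R] [IsLocalRing R] [Algebra k R]
    (hres : Function.Surjective (algebraMap k (ResidueField R))) {σ : R →ₐ[k] R}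
    (h : ∀ x ∈ maximalIdeal R, σ x = x) : σ = AlgHom.id k R := by
  ext r
  obtain ⟨c, hc⟩ := hres (residue R r)
  have hr : r - algebraMap k R c ∈ maximalIdeal R := by
    rw [← residue_eq_zero_iff, map_sub, ← hc]
    exact sub_self _
  simpa using congr($(h _ hr) + algebraMap k R c)

/-- Let `k` be a field of characteristic zero, `R` a commutative Noetherian local
`k`-algebra with residue field `k` (i.e. `k → R/m` is an isomorphism), and `G` a finite
group of `k`-algebra automorphisms of `R`.  If `g ∈ G` induces the identity on the
cotangent space `m/m²` (i.e. `g x - x ∈ m²` for all `x ∈ m`), then `g` is the identity. -/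
theorem faithful_on_cotangent {k R : Type*} [Field k] [CharZero k] [CommRing R]
    [IsNoetherianRing R] [IsLocalRing R] [Algebra k R]
    (hres : Function.Bijective (algebraMap k (IsLocalRing.ResidueField R)))
    (G : Subgroup (R ≃ₐ[k] R)) [Finite G] (g : R ≃ₐ[k] R) (hg : g ∈ G)
    (hid : ∀ x ∈ IsLocalRing.maximalIdeal R, g x - x ∈ (IsLocalRing.maximalIdeal R) ^ 2) :
    g = 1 := by
  have hgn : (g : R →+* R)^[Nat.card G] = id := by
    have : g ^ Nat.card G = 1 := congr($(pow_card_eq_one' (x := (⟨g, hg⟩ : G))).val)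
    ext x
    simpa using congr($this x)
  have hn : IsUnit (Nat.card G : R) := by
    simpa using (IsUnit.mk0 (Nat.card G : k) (Nat.cast_ne_zero.2 Nat.card_pos.ne')).map
      (algebraMap k R)
  have hfix := Ideal.eq_of_forall_sub_mem_pow_two_of_iterate_eq_id hn hgn hid
  exact AlgEquiv.ext (AlgHom.congr_fun
    (algHom_eq_id_of_forall_mem_maximalIdeal hres.2 (σ := g.toAlgHom) hfix))
end
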